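/- arXiv:1701.07563 — 4 statements merged into one kernel-verified Lean document; each statement's English description precedes it below -/
import Mathlib

section
/- For any upper unitriangular 4×4 complex matrix X, the minors satisfy the exchange identity Δ^{12}_{24}(X)·Δ^{23}_{34}(X) = Δ^{123}_{234}(X)·Δ^{2}_{4}(X) + Δ^{3}_{4}(X)·Δ^{12}_{34}(X), where Δ^{L}_{C}(X) denotes the minor of X with rows L and columns C. -/
open Matrix

theorem det_exchange_of_one_one_eq_one_of_two_one_eq_zero {R : Type*} [CommRing R]
    (X : Matrix (Fin 4) (Fin 4) R) (h₁₁ : X 1 1 = 1) (h₂₁ : X 2 1 = 0) :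
    det !![X 0 1, X 0 3; X 1 1, X 1 3] * det !![X 1 2, X 1 3; X 2 2, X 2 3] =
      det !![X 0 1, X 0 2, X 0 3; X 1 1, X 1 2, X 1 3; X 2 1, X 2 2, X 2 3] * X 1 3
        + X 2 3 * det !![X 0 2, X 0 3; X 1 2, X 1 3] := by
  simp only [det_fin_two, det_fin_three, of_apply, cons_val', cons_val, cons_val_zero,
    cons_val_one, cons_val_fin_one, h₁₁, h₂₁]
  ring

theorem exchange_identity_minors
    (X : Matrix (Fin 4) (Fin 4) ℂ)
    (hd : ∀ i, X i i = 1)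
    (hl : ∀ i j : Fin 4, (j : ℕ) < (i : ℕ) → X i j = 0) :
    det !![X 0 1, X 0 3; X 1 1, X 1 3] * det !![X 1 2, X 1 3; X 2 2, X 2 3] =
      det !![X 0 1, X 0 2, X 0 3; X 1 1, X 1 2, X 1 3; X 2 1, X 2 2, X 2 3] * X 1 3
        + X 2 3 * det !![X 0 2, X 0 3; X 1 2, X 1 3] :=
  det_exchange_of_one_one_eq_one_of_two_one_eq_zero X (hd 1) (hl 2 1 (by decide))
end

section
/- For any real upper unitriangular 4×4 matrix X, if Δ^{1}_{4}(X), Δ^{12}_{34}(X), Δ^{123}_{234}(X), Δ^{2}_{4}(X), Δ^{3}_{4}(X), Δ^{12}_{24}(X) are all positive, then Δ^{23}_{34}(X) is positive. -/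
open Matrix

theorem minor_positivity_transfer
    (X : Matrix (Fin 4) (Fin 4) ℝ)
    (hd : ∀ i, X i i = 1)
    (hl : ∀ i j : Fin 4, (j : ℕ) < (i : ℕ) → X i j = 0)
    (h14 : 0 < X 0 3)
    (h12_34 : 0 < det !![X 0 2, X 0 3; X 1 2, X 1 3])
    (h123_234 : 0 < det !![X 0 1, X 0 2, X 0 3; X 1 1, X 1 2, X 1 3; X 2 1, X 2 2, X 2 3])
    (h24 : 0 < X 1 3)
    (h34 : 0 < X 2 3)
    (h12_24 : 0 < det !![X 0 1, X 0 3; X 1 1, X 1 3]) :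
    0 < det !![X 1 2, X 1 3; X 2 2, X 2 3] := by
  have h11 := hd 1
  have h22 := hd 2
  have h21 : X 2 1 = 0 := hl 2 1 (by norm_num)
  simp [det_fin_two_of, det_fin_three, h11, h22, h21] at *
  nlinarith [mul_pos h24 (sub_pos.mpr h123_234), mul_pos h34 (sub_pos.mpr h12_34),
    sub_pos.mpr h12_24, h24, h34]
end

section
/- A real upper unitriangular 4×4 matrix X has all 12 non-trivial minors positive if and only if the six minors Δ^{1}_{4}(X), Δ^{12}_{34}(X), Δ^{123}_{234}(X), Δ^{12}_{24}(X), Δ^{2}_{4}(X), Δ^{3}_{4}(X) are positive. Here the 12 non-trivial minors are Δ^{1}_{2}, Δ^{2}_{3}, Δ^{3}_{4}, Δ^{1}_{3}, Δ^{2}_{4}, Δ^{1}_{4}, Δ^{12}_{23}, Δ^{23}_{34}, Δ^{12}_{24}, Δ^{13}_{34}, Δ^{12}_{34}, Δ^{123}_{234}. -/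
/-!
Write `a b c; d e; f` for the entries of `X` above the diagonal, row by row. The six given minors force the
other six to be positive through the identities
`(a e - c)(d f - e) = e Δ^{123}_{234} + f Δ^{12}_{34}`, `f (a d - b) = Δ^{123}_{234} + Δ^{12}_{24}` and
`e (b f - c) = f Δ^{12}_{34} + c (d f - e)`, together with `a e > c`, `d f > e` and `b e > c d`
for the positivity of `a`, `d` and `b`.
-/

open Matrix

theorem det_fin_three_of_one_zero_one {R : Type*} [CommRing R] (a b c d e f : R) :
    det !![a, b, c; 1, d, e; 0, 1, f] = a * (d * f - e) - b * f + c := by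
  simp [det_fin_three]
  ring

section Unitriangular

variable {R : Type*} [CommRing R] [LinearOrder R] [IsStrictOrderedRing R] {a b c d e f : R}

theorem unitriangular_minors_pos_of_initial_minors_pos (hc : 0 < c) (hbe : 0 < b * e - c * d)
    (hM : 0 < a * (d * f - e) - b * f + c) (hae : 0 < a * e - c) (he : 0 < e) (hf : 0 < f) :
    0 < a ∧ 0 < d ∧ 0 < b ∧ 0 < a * d - b ∧ 0 < d * f - e ∧ 0 < b * f - c := by
  have ha : 0 < a := pos_of_mul_pos_left (by linarith) he.le
  have hdf : 0 < d * f - e := by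
    refine pos_of_mul_pos_right (a := a * e - c) ?_ hae.le
    calc 0 < e * (a * (d * f - e) - b * f + c) + f * (b * e - c * d) := by positivity
      _ = (a * e - c) * (d * f - e) := by ring
  have hd : 0 < d := pos_of_mul_pos_left (by linarith) hf.le
  have hb : 0 < b := pos_of_mul_pos_left (by nlinarith) he.le
  have had : 0 < a * d - b := by
    refine pos_of_mul_pos_right (a := f) ?_ hf.le
    calc 0 < a * (d * f - e) - b * f + c + (a * e - c) := by positivity
      _ = f * (a * d - b) := by ring
  have hbf : 0 < b * f - c := by
    refine pos_of_mul_pos_right (a := e) ?_ he.le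
    calc 0 < f * (b * e - c * d) + c * (d * f - e) := by positivity
      _ = e * (b * f - c) := by ring
  exact ⟨ha, hd, hb, had, hdf, hbf⟩

theorem unitriangular_minors_pos_iff :
    (0 < a ∧ 0 < d ∧ 0 < f ∧ 0 < b ∧ 0 < e ∧ 0 < c ∧ 0 < a * d - b ∧ 0 < d * f - e ∧
      0 < a * e - c ∧ 0 < b * f - c ∧ 0 < b * e - c * d ∧ 0 < a * (d * f - e) - b * f + c) ↔
    (0 < c ∧ 0 < b * e - c * d ∧ 0 < a * (d * f - e) - b * f + c ∧ 0 < a * e - c ∧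
      0 < e ∧ 0 < f) := by
  constructor
  · rintro ⟨-, -, hf, -, he, hc, -, -, hae, -, hbe, hM⟩
    exact ⟨hc, hbe, hM, hae, he, hf⟩
  · rintro ⟨hc, hbe, hM, hae, he, hf⟩
    obtain ⟨ha, hd, hb, had, hdf, hbf⟩ :=
      unitriangular_minors_pos_of_initial_minors_pos hc hbe hM hae he hf
    exact ⟨ha, hd, hf, hb, he, hc, had, hdf, hae, hbf, hbe, hM⟩

end Unitriangular

theorem total_positivity_criterion
    (X : Matrix (Fin 4) (Fin 4) ℝ)
    (hd : ∀ i, X i i = 1)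
    (hl : ∀ i j : Fin 4, (j : ℕ) < (i : ℕ) → X i j = 0) :
    (0 < X 0 1 ∧ 0 < X 1 2 ∧ 0 < X 2 3 ∧ 0 < X 0 2 ∧ 0 < X 1 3 ∧ 0 < X 0 3 ∧
      0 < det !![X 0 1, X 0 2; X 1 1, X 1 2] ∧
      0 < det !![X 1 2, X 1 3; X 2 2, X 2 3] ∧
      0 < det !![X 0 1, X 0 3; X 1 1, X 1 3] ∧
      0 < det !![X 0 2, X 0 3; X 2 2, X 2 3] ∧
      0 < det !![X 0 2, X 0 3; X 1 2, X 1 3] ∧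
      0 < det !![X 0 1, X 0 2, X 0 3; X 1 1, X 1 2, X 1 3; X 2 1, X 2 2, X 2 3]) ↔
    (0 < X 0 3 ∧
      0 < det !![X 0 2, X 0 3; X 1 2, X 1 3] ∧
      0 < det !![X 0 1, X 0 2, X 0 3; X 1 1, X 1 2, X 1 3; X 2 1, X 2 2, X 2 3] ∧
      0 < det !![X 0 1, X 0 3; X 1 1, X 1 3] ∧
      0 < X 1 3 ∧ 0 < X 2 3) := by
  rw [hd 1, hd 2, hl 2 1 (by decide)]
  simp only [det_fin_two_of, det_fin_three_of_one_zero_one, mul_one]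
  exact unitriangular_minors_pos_iff
end

section
/- The set of totally positive matrices in N (real upper unitriangular 4×4 matrices with all 12 non-trivial minors positive) is closed under multiplication by elementary matrices with positive parameter: if X is totally positive and t > 0, then X·x_i(t) is totally positive for i = 1, 2, 3, where x_1(t) = I + tE_{12}, x_2(t) = I + tE_{23}, x_3(t) = I + tE_{34}. -/
/-!
Right multiplication by `x_i(t)` adds `t` times column `i` to column `i + 1`. So a minor whose
columns contain `i + 1` but not `i` gains `t` times the minor with column `i + 1` replaced by
column `i`, and all other minors are unchanged. For an upper unitriangular totally positive `X`
the added minor is positive: it is `1`, one of the twelve minors, or a product of two of them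
(`Δ^{13}_{24} = Δ^{1}_{2} Δ^{3}_{4}`).
-/

open Matrix

/-- All 12 non-trivial minors of a 4×4 upper unitriangular matrix are positive. -/
def TotallyPositive (X : Matrix (Fin 4) (Fin 4) ℝ) : Prop :=
  0 < X 0 1 ∧ 0 < X 1 2 ∧ 0 < X 2 3 ∧ 0 < X 0 2 ∧ 0 < X 1 3 ∧ 0 < X 0 3 ∧
  0 < det !![X 0 1, X 0 2; X 1 1, X 1 2] ∧
  0 < det !![X 1 2, X 1 3; X 2 2, X 2 3] ∧
  0 < det !![X 0 1, X 0 3; X 1 1, X 1 3] ∧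
  0 < det !![X 0 2, X 0 3; X 2 2, X 2 3] ∧
  0 < det !![X 0 2, X 0 3; X 1 2, X 1 3] ∧
  0 < det !![X 0 1, X 0 2, X 0 3; X 1 1, X 1 2, X 1 3; X 2 1, X 2 2, X 2 3]

def upperUnitri (a b c d e f : ℝ) : Matrix (Fin 4) (Fin 4) ℝ :=
  !![1, a, b, c; 0, 1, d, e; 0, 0, 1, f; 0, 0, 0, 1]

theorem eq_upperUnitri {X : Matrix (Fin 4) (Fin 4) ℝ} (hd : ∀ i, X i i = 1)
    (hl : ∀ i j : Fin 4, (j : ℕ) < (i : ℕ) → X i j = 0) :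
    X = upperUnitri (X 0 1) (X 0 2) (X 0 3) (X 1 2) (X 1 3) (X 2 3) := by
  ext i j
  fin_cases i <;> fin_cases j <;> simp [upperUnitri, hd, hl]

theorem totallyPositive_upperUnitri_iff {a b c d e f : ℝ} :
    TotallyPositive (upperUnitri a b c d e f) ↔
      0 < a ∧ 0 < d ∧ 0 < f ∧ 0 < b ∧ 0 < e ∧ 0 < c ∧
      0 < a * d - b ∧ 0 < d * f - e ∧ 0 < a * e - c ∧ 0 < b * f - c ∧
      0 < b * e - c * d ∧ 0 < a * d * f - a * e - b * f + c := by
  simp [TotallyPositive, upperUnitri, det_fin_two_of, det_fin_three]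

section Elementary

variable (a b c d e f t : ℝ)

theorem upperUnitri_mul_one_add_single_zero_one :
    upperUnitri a b c d e f * (1 + single 0 1 t) = upperUnitri (a + t) b c d e f := by
  ext i j
  fin_cases i <;> fin_cases j <;>
    simp [upperUnitri, mul_apply, Fin.sum_univ_four, one_apply, single_apply, add_comm]

theorem upperUnitri_mul_one_add_single_one_two :
    upperUnitri a b c d e f * (1 + single 1 2 t) =
      upperUnitri a (b + a * t) c (d + t) e f := by
  ext i j
  fin_cases i <;> fin_cases j <;>
    simp [upperUnitri, mul_apply, Fin.sum_univ_four, one_apply, single_apply, add_comm]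

theorem upperUnitri_mul_one_add_single_two_three :
    upperUnitri a b c d e f * (1 + single 2 3 t) =
      upperUnitri a b (c + b * t) d (e + d * t) (f + t) := by
  ext i j
  fin_cases i <;> fin_cases j <;>
    simp [upperUnitri, mul_apply, Fin.sum_univ_four, one_apply, single_apply, add_comm]

variable {a b c d e f t}

theorem TotallyPositive.mul_one_add_single_zero_one
    (hX : TotallyPositive (upperUnitri a b c d e f)) (ht : 0 < t) :
    TotallyPositive (upperUnitri a b c d e f * (1 + single 0 1 t)) := by
  rw [upperUnitri_mul_one_add_single_zero_one, totallyPositive_upperUnitri_iff]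
  obtain ⟨ha, hd, hf, hb, he, hc, m1, m2, m3, m4, m5, m6⟩ :=
    totallyPositive_upperUnitri_iff.mp hX
  exact ⟨by linarith, hd, hf, hb, he, hc, by linear_combination m1 + mul_pos ht hd, m2,
    by linear_combination m3 + mul_pos ht he, m4, m5, by linear_combination m6 + mul_pos ht m2⟩

theorem TotallyPositive.mul_one_add_single_one_two
    (hX : TotallyPositive (upperUnitri a b c d e f)) (ht : 0 < t) :
    TotallyPositive (upperUnitri a b c d e f * (1 + single 1 2 t)) := by
  rw [upperUnitri_mul_one_add_single_one_two, totallyPositive_upperUnitri_iff]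
  obtain ⟨ha, hd, hf, hb, he, hc, m1, m2, m3, m4, m5, m6⟩ :=
    totallyPositive_upperUnitri_iff.mp hX
  exact ⟨ha, by linarith, hf, by linear_combination hb + mul_pos ha ht, he, hc,
    by linear_combination m1, by linear_combination m2 + mul_pos ht hf, m3,
    by linear_combination m4 + mul_pos (mul_pos ha ht) hf,
    by linear_combination m5 + mul_pos ht m3, by linear_combination m6⟩

theorem TotallyPositive.mul_one_add_single_two_three
    (hX : TotallyPositive (upperUnitri a b c d e f)) (ht : 0 < t) :
    TotallyPositive (upperUnitri a b c d e f * (1 + single 2 3 t)) := by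
  rw [upperUnitri_mul_one_add_single_two_three, totallyPositive_upperUnitri_iff]
  obtain ⟨ha, hd, hf, hb, he, hc, m1, m2, m3, m4, m5, m6⟩ :=
    totallyPositive_upperUnitri_iff.mp hX
  exact ⟨ha, hd, by linarith, hb, by linear_combination he + mul_pos hd ht,
    by linear_combination hc + mul_pos hb ht, m1, by linear_combination m2,
    by linear_combination m3 + mul_pos ht m1, by linear_combination m4,
    by linear_combination m5, by linear_combination m6⟩

end Elementary

theorem totally_positive_stable_under_elementary
    (X : Matrix (Fin 4) (Fin 4) ℝ)
    (hd : ∀ i, X i i = 1)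
    (hl : ∀ i j : Fin 4, (j : ℕ) < (i : ℕ) → X i j = 0)
    (hX : TotallyPositive X) (t : ℝ) (ht : 0 < t) :
    TotallyPositive (X * (1 + single 0 1 t)) ∧
    TotallyPositive (X * (1 + single 1 2 t)) ∧
    TotallyPositive (X * (1 + single 2 3 t)) := by
  rw [eq_upperUnitri hd hl] at hX ⊢
  exact ⟨hX.mul_one_add_single_zero_one ht,
    hX.mul_one_add_single_one_two ht,
    hX.mul_one_add_single_two_three ht⟩
end
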